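/- arXiv:1611.01429 — 3 statements merged into one kernel-verified Lean document; each statement's English description precedes it below -/
import Mathlib

section
/- For every formula φ ∈ Fm, ⊢_{EL5} ¬Kφ → K¬□φ. -/
/-- Formulas of the modal-epistemic language: variables, ⊥, ∧, ∨, →, □, K. -/
inductive Fm : Type
  | var : ℕ → Fm
  | bot : Fm
  | and : Fm → Fm → Fm
  | or : Fm → Fm → Fm
  | imp : Fm → Fm → Fm
  | box : Fm → Fm
  | k : Fm → Fm
  deriving DecidableEq

namespace Fm

/-- ¬φ := φ → ⊥ -/
def neg (φ : Fm) : Fm := φ.imp .bot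

/-- ⊤ := ¬⊥ -/
def top : Fm := neg .bot

/-- φ ↔ ψ := (φ→ψ) ∧ (ψ→φ) -/
def iff (φ ψ : Fm) : Fm := (φ.imp ψ).and (ψ.imp φ)

/-- Propositional identity φ ≡ ψ := □(φ→ψ) ∧ □(ψ→φ). -/
def ident (φ ψ : Fm) : Fm := ((φ.imp ψ).box).and ((ψ.imp φ).box)

/-- Substitution of `σ` for every occurrence of the variable `x`. -/
def subst (x : ℕ) (σ : Fm) : Fm → Fm
  | var n => if n = x then σ else var n
  | bot => bot
  | and a b => and (subst x σ a) (subst x σ b)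
  | or a b => or (subst x σ a) (subst x σ b)
  | imp a b => imp (subst x σ a) (subst x σ b)
  | box a => box (subst x σ a)
  | k a => k (subst x σ a)

/-- Propositional formulas (the set Fm₀): neither □ nor K occurs. -/
def IsProp : Fm → Prop
  | var _ => True
  | bot => True
  | and a b => a.IsProp ∧ b.IsProp
  | or a b => a.IsProp ∧ b.IsProp
  | imp a b => a.IsProp ∧ b.IsProp
  | box _ => False
  | k _ => False

end Fm

/-- Hilbert-style axiom schemes of intuitionistic propositional logic, with
schematic letters ranging over all formulas of `Fm` (so the derivable formulas
are exactly the substitution instances of IPC theorems). -/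
inductive IntAx : Fm → Prop
  | k (φ ψ : Fm) : IntAx (φ.imp (ψ.imp φ))
  | s (φ ψ χ : Fm) : IntAx ((φ.imp (ψ.imp χ)).imp ((φ.imp ψ).imp (φ.imp χ)))
  | andIntro (φ ψ : Fm) : IntAx (φ.imp (ψ.imp (φ.and ψ)))
  | andLeft (φ ψ : Fm) : IntAx ((φ.and ψ).imp φ)
  | andRight (φ ψ : Fm) : IntAx ((φ.and ψ).imp ψ)
  | orInl (φ ψ : Fm) : IntAx (φ.imp (φ.or ψ))
  | orInr (φ ψ : Fm) : IntAx (ψ.imp (φ.or ψ))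
  | orElim (φ ψ χ : Fm) : IntAx ((φ.imp χ).imp ((ψ.imp χ).imp ((φ.or ψ).imp χ)))
  | exfalso (φ : Fm) : IntAx (Fm.bot.imp φ)

/-- Derivability in intuitionistic propositional calculus from hypotheses `Φ`
(Hilbert style, Modus Ponens as the only rule). -/
inductive IPC (Φ : Set Fm) : Fm → Prop
  | hyp {φ} : φ ∈ Φ → IPC Φ φ
  | ax {φ} : IntAx φ → IPC Φ φ
  | mp {φ ψ} : IPC Φ (φ.imp ψ) → IPC Φ φ → IPC Φ ψ

/-- The modal logics L3, EL3⁻ (written `EL3m`), EL3, EL4, EL5. -/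
inductive ModalLogic : Type
  | L3 | EL3m | EL3 | EL4 | EL5
  deriving DecidableEq

/-- The axioms of the logic `L`:
(INT) all theorems of IPC and their substitution instances,
(A1) □(φ∨ψ)→(□φ∨□ψ), (A2) □φ→φ, (A3) □(φ→ψ)→□(□φ→□ψ);
(A7) □φ→□Kφ for the epistemic logics EL3⁻, EL3, EL4, EL5;
(A8) Kφ→¬¬φ for EL3, EL4, EL5; (A4) □φ→□□φ for EL4, EL5;
(A5) ¬□φ→□¬□φ for EL5. -/
inductive IsAxiom : ModalLogic → Fm → Prop
  | int {L : ModalLogic} {φ : Fm} : IPC ∅ φ → IsAxiom L φ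
  | a1 (L : ModalLogic) (φ ψ : Fm) :
      IsAxiom L (((φ.or ψ).box).imp ((φ.box).or (ψ.box)))
  | a2 (L : ModalLogic) (φ : Fm) : IsAxiom L ((φ.box).imp φ)
  | a3 (L : ModalLogic) (φ ψ : Fm) :
      IsAxiom L (((φ.imp ψ).box).imp (((φ.box).imp (ψ.box)).box))
  | a7 {L : ModalLogic} (φ : Fm) : L ≠ ModalLogic.L3 →
      IsAxiom L ((φ.box).imp ((φ.k).box))
  | a8 {L : ModalLogic} (φ : Fm) :
      L = ModalLogic.EL3 ∨ L = ModalLogic.EL4 ∨ L = ModalLogic.EL5 →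
      IsAxiom L ((φ.k).imp (φ.neg.neg))
  | a4 {L : ModalLogic} (φ : Fm) :
      L = ModalLogic.EL4 ∨ L = ModalLogic.EL5 →
      IsAxiom L ((φ.box).imp (φ.box.box))
  | a5 {L : ModalLogic} (φ : Fm) : L = ModalLogic.EL5 →
      IsAxiom L ((φ.box.neg).imp (φ.box.neg.box))

/-- Derivability from hypotheses `Φ` in logic `L`: hypotheses, axioms, the
theorem scheme (T) of tertium non datur, Modus Ponens, and Axiom Necessitation
(applicable only to axioms). -/
inductive Deriv (L : ModalLogic) (Φ : Set Fm) : Fm → Prop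
  | hyp {φ} : φ ∈ Φ → Deriv L Φ φ
  | ax {φ} : IsAxiom L φ → Deriv L Φ φ
  | tnd (φ : Fm) : Deriv L Φ (φ.or φ.neg)
  | mp {φ ψ} : Deriv L Φ (φ.imp ψ) → Deriv L Φ φ → Deriv L Φ ψ
  | an {φ} : IsAxiom L φ → Deriv L Φ (φ.box)

/-- ⊢_L φ : theoremhood in logic `L`. -/
def Thm (L : ModalLogic) (φ : Fm) : Prop := Deriv L ∅ φ

namespace Deriv

variable {L : ModalLogic} {Φ : Set Fm}

lemma intAx {φ : Fm} (h : IntAx φ) : Deriv L Φ φ :=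
  ax (IsAxiom.int (IPC.ax h))

lemma weaken {b : Fm} (a : Fm) (hb : Deriv L Φ b) : Deriv L Φ (a.imp b) :=
  mp (intAx (IntAx.k b a)) hb

lemma imp_mp {a b c : Fm} (habc : Deriv L Φ (a.imp (b.imp c))) (hab : Deriv L Φ (a.imp b)) :
    Deriv L Φ (a.imp c) :=
  mp (mp (intAx (IntAx.s a b c)) habc) hab

lemma imp_trans {a b c : Fm} (hab : Deriv L Φ (a.imp b)) (hbc : Deriv L Φ (b.imp c)) :
    Deriv L Φ (a.imp c) :=
  imp_mp (weaken a hbc) hab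

lemma imp_precomp {p q : Fm} (hpq : Deriv L Φ (p.imp q)) (r : Fm) :
    Deriv L Φ ((q.imp r).imp (p.imp r)) :=
  imp_mp (imp_trans (intAx (IntAx.k (q.imp r) p)) (intAx (IntAx.s p q r)))
    (weaken (q.imp r) hpq)

lemma box_imp_k (hL : L ≠ ModalLogic.L3) (φ : Fm) : Deriv L Φ (φ.box.imp φ.k) :=
  imp_trans (ax (IsAxiom.a7 φ hL)) (ax (IsAxiom.a2 L φ.k))

end Deriv

/-- ⊢_{EL5} ¬Kφ → K¬□φ. -/
theorem stmt_3 (φ : Fm) :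
    Thm ModalLogic.EL5 ((φ.k.neg).imp (φ.box.neg.k)) := by
  have hEL5 : ModalLogic.EL5 ≠ ModalLogic.L3 := by decide
  have not_k_imp_not_box : Thm ModalLogic.EL5 (φ.k.neg.imp φ.box.neg) :=
    Deriv.imp_precomp (Deriv.box_imp_k hEL5 φ) Fm.bot
  have not_box_imp_box_not_box : Thm ModalLogic.EL5 (φ.box.neg.imp φ.box.neg.box) :=
    Deriv.ax (IsAxiom.a5 φ rfl)
  exact Deriv.imp_trans (Deriv.imp_trans not_k_imp_not_box not_box_imp_box_not_box)
    (Deriv.box_imp_k hEL5 φ.box.neg)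
end

section
/- Let 𝓛 ∈ {EL3⁻, EL3, EL4, EL5} and let Φ ∪ {χ} ⊆ Fm₀ be a set of propositional formulas (formulas containing neither □ nor K). Then □Φ ⊢_𝓛 □χ if and only if Φ ⊢_{IPC} χ, where □Φ := {□ψ : ψ ∈ Φ} and ⊢_{IPC} denotes derivability in intuitionistic propositional calculus. -/
/-!
If `Φ ⊢ χ` in IPC, the derivation lifts under `□`: IPC axioms are necessitated by (AN), and
(A3) with (A2) turns `□(φ → ψ)` and `□φ` into `□ψ`.

Conversely, suppose `Φ ⊬ χ` and pick a prime theory `T ⊇ Φ` with `χ ∉ T`. In the canonical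
Kripke model of IPC (prime theories ordered by inclusion) read `□φ` as "`φ` holds at `T`" and
`Kφ` as `φ`. Every axiom, of any of the logics, holds at all worlds above `T`, and tertium non
datur holds at every maximal world. Evaluating at a maximal prime theory `M ⊇ T`, everything
derivable from `□Φ` holds, but `□χ` fails there since `χ ∉ T`.
-/

namespace IPC

variable {Φ Ψ : Set Fm} {φ ψ : Fm}

theorem mono (h : IPC Φ φ) (hΦΨ : Φ ⊆ Ψ) : IPC Ψ φ := by
  induction h with
  | hyp h => exact hyp (hΦΨ h)
  | ax h => exact ax h
  | mp _ _ ih₁ ih₂ => exact mp ih₁ ih₂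

theorem imp_self (Φ : Set Fm) (φ : Fm) : IPC Φ (φ.imp φ) :=
  mp (mp (ax (.s φ (φ.imp φ) φ)) (ax (.k φ (φ.imp φ)))) (ax (.k φ φ))

theorem imp_intro (h : IPC (insert φ Φ) ψ) : IPC Φ (φ.imp ψ) := by
  induction h with
  | hyp h =>
    rcases Set.mem_insert_iff.mp h with rfl | h
    · exact imp_self Φ _
    · exact mp (ax (.k _ _)) (hyp h)
  | ax h => exact mp (ax (.k _ _)) (ax h)
  | mp _ _ ih₁ ih₂ => exact mp (mp (ax (.s _ _ _)) ih₁) ih₂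

theorem cut (hφ : IPC Φ φ) (h : IPC (insert φ Φ) ψ) : IPC Φ ψ :=
  mp (imp_intro h) hφ

theorem exists_of_sUnion {c : Set (Set Fm)} (hc : IsChain (· ⊆ ·) c) (hne : c.Nonempty)
    (h : IPC (⋃₀ c) φ) : ∃ S ∈ c, IPC S φ := by
  induction h with
  | hyp h => obtain ⟨S, hS, hφS⟩ := h; exact ⟨S, hS, hyp hφS⟩
  | ax h => obtain ⟨S, hS⟩ := hne; exact ⟨S, hS, ax h⟩
  | mp _ _ ih₁ ih₂ =>
    obtain ⟨S₁, hS₁, h₁⟩ := ih₁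
    obtain ⟨S₂, hS₂, h₂⟩ := ih₂
    rcases hc.total hS₁ hS₂ with h | h
    · exact ⟨S₂, hS₂, mp (h₁.mono h) h₂⟩
    · exact ⟨S₁, hS₁, mp h₁ (h₂.mono h)⟩

end IPC

structure IsPrimeTheory (S : Set Fm) : Prop where
  mem_of_ipc : ∀ {φ}, IPC S φ → φ ∈ S
  bot_notMem : Fm.bot ∉ S
  mem_or_mem : ∀ {φ ψ}, φ.or ψ ∈ S → φ ∈ S ∨ ψ ∈ S

namespace IsPrimeTheory

variable {S : Set Fm}

theorem mem_of_imp_mem (hS : IsPrimeTheory S) {φ ψ : Fm} (h : φ.imp ψ ∈ S) (hφ : φ ∈ S) :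
    ψ ∈ S :=
  hS.mem_of_ipc (.mp (.hyp h) (.hyp hφ))

theorem not_ipc_bot (hS : IsPrimeTheory S) : ¬ IPC S Fm.bot :=
  fun h => hS.bot_notMem (hS.mem_of_ipc h)

theorem of_maximal {χ : Fm} (hS : Maximal (fun S => ¬ IPC S χ) S) : IsPrimeTheory S := by
  have extend : ∀ {φ}, φ ∉ S → IPC (insert φ S) χ := fun hφ => by
    by_contra h
    exact hφ (hS.2 h (Set.subset_insert _ S) (Set.mem_insert _ S))
  refine ⟨fun hφ => ?_, fun hbot => ?_, fun {φ ψ} hφψ => ?_⟩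
  · by_contra hφS
    exact hS.1 (IPC.cut hφ (extend hφS))
  · exact hS.1 (.mp (.ax (.exfalso χ)) (.hyp hbot))
  · by_contra h
    rw [not_or] at h
    exact hS.1 (.mp (.mp (.mp (.ax (.orElim φ ψ χ)) (IPC.imp_intro (extend h.1)))
      (IPC.imp_intro (extend h.2))) (.hyp hφψ))

end IsPrimeTheory

theorem exists_maximal_not_ipc {Φ : Set Fm} {χ : Fm} (h : ¬ IPC Φ χ) :
    ∃ S, Φ ⊆ S ∧ Maximal (fun S => ¬ IPC S χ) S :=
  zorn_subset_nonempty {S | ¬ IPC S χ}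
    (fun c hcS hc hne => ⟨⋃₀ c, fun hd => by
        obtain ⟨S, hS, hSχ⟩ := IPC.exists_of_sUnion hc hne hd
        exact hcS hS hSχ,
      fun _ => Set.subset_sUnion_of_mem⟩) Φ h

theorem exists_isPrimeTheory {Φ : Set Fm} {χ : Fm} (h : ¬ IPC Φ χ) :
    ∃ S, IsPrimeTheory S ∧ Φ ⊆ S ∧ χ ∉ S := by
  obtain ⟨S, hΦS, hS⟩ := exists_maximal_not_ipc h
  exact ⟨S, .of_maximal hS, hΦS, fun hχ => hS.1 (.hyp hχ)⟩

section Kripke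

variable {W : Type*} [Preorder W]

def Forces (V : W → ℕ → Prop) (r : W) : W → Fm → Prop
  | w, .var n => V w n
  | _, .bot => False
  | w, .and φ ψ => Forces V r w φ ∧ Forces V r w ψ
  | w, .or φ ψ => Forces V r w φ ∨ Forces V r w ψ
  | w, .imp φ ψ => ∀ w', w ≤ w' → Forces V r w' φ → Forces V r w' ψ
  | _, .box φ => Forces V r r φ
  | w, .k φ => Forces V r w φ

variable {V : W → ℕ → Prop} {r : W}

theorem Forces.mono (hV : ∀ n, Monotone (V · n)) {φ : Fm} {w w' : W} (hw : w ≤ w')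
    (h : Forces V r w φ) : Forces V r w' φ := by
  induction φ generalizing w w' with
  | var n => exact hV n hw h
  | bot => exact h
  | and φ ψ ihφ ihψ => exact ⟨ihφ hw h.1, ihψ hw h.2⟩
  | or φ ψ ihφ ihψ => exact h.imp (ihφ hw) (ihψ hw)
  | imp φ ψ => exact fun w'' hw' => h w'' (hw.trans hw')
  | box φ => exact h
  | k φ ih => exact ih hw h

theorem forces_of_intAx (hV : ∀ n, Monotone (V · n)) {φ : Fm} (h : IntAx φ) (w : W) :
    Forces V r w φ := by
  cases h with
  | k φ ψ => exact fun _ _ hφ _ h₂ _ => hφ.mono hV h₂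
  | s φ ψ χ =>
    exact fun _ _ h₁ _ h₂ h₂' w₃ h₃ hφ =>
      h₁ w₃ (h₂.trans h₃) hφ w₃ le_rfl (h₂' w₃ h₃ hφ)
  | andIntro φ ψ => exact fun _ _ hφ _ h₂ hψ => ⟨hφ.mono hV h₂, hψ⟩
  | andLeft φ ψ => exact fun _ _ h => h.1
  | andRight φ ψ => exact fun _ _ h => h.2
  | orInl φ ψ => exact fun _ _ h => Or.inl h
  | orInr φ ψ => exact fun _ _ h => Or.inr h
  | orElim φ ψ χ =>
    exact fun _ _ hφχ w₂ h₂ hψχ w₃ h₃ h =>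
      h.elim (hφχ w₃ (h₂.trans h₃)) (hψχ w₃ h₃)
  | exfalso φ => exact fun _ _ h => h.elim

theorem forces_of_ipc (hV : ∀ n, Monotone (V · n)) {Φ : Set Fm} {φ : Fm} {w : W}
    (hΦ : ∀ ψ ∈ Φ, Forces V r w ψ) (h : IPC Φ φ) : Forces V r w φ := by
  induction h with
  | hyp h => exact hΦ _ h
  | ax h => exact forces_of_intAx hV h w
  | mp _ _ ih₁ ih₂ => exact ih₁ w le_rfl ih₂

theorem forces_of_isAxiom (hV : ∀ n, Monotone (V · n)) {L : ModalLogic} {φ : Fm}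
    (h : IsAxiom L φ) {w : W} (hw : r ≤ w) : Forces V r w φ := by
  cases h with
  | int h => exact forces_of_ipc hV (fun _ h => absurd h (Set.notMem_empty _)) h
  | a1 φ ψ => exact fun _ _ h => h
  | a2 φ => exact fun _ h₁ h => h.mono hV (hw.trans h₁)
  | a3 φ ψ => exact fun _ _ h _ _ hφ => h r le_rfl hφ
  | a7 φ _ => exact fun _ _ h => h
  | a8 φ _ => exact fun _ _ hφ w₂ h₂ hnφ => hnφ w₂ le_rfl (hφ.mono hV h₂)
  | a4 φ _ => exact fun _ _ h => h
  | a5 φ _ => exact fun w₁ _ h _ _ hφ => h w₁ le_rfl hφ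

theorem forces_or_neg_of_isMax (hV : ∀ n, Monotone (V · n)) {m : W} (hm : IsMax m)
    (φ : Fm) : Forces V r m (φ.or φ.neg) := by
  by_cases hφ : Forces V r m φ
  · exact Or.inl hφ
  · exact Or.inr fun w hw hφw => hφ (hφw.mono hV (hm hw))

theorem forces_of_deriv (hV : ∀ n, Monotone (V · n)) {m : W} (hrm : r ≤ m) (hm : IsMax m)
    {L : ModalLogic} {Φ : Set Fm} {φ : Fm} (hΦ : ∀ ψ ∈ Φ, Forces V r m ψ)
    (h : Deriv L Φ φ) : Forces V r m φ := by
  induction h with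
  | hyp h => exact hΦ _ h
  | ax h => exact forces_of_isAxiom hV h hrm
  | tnd φ => exact forces_or_neg_of_isMax hV hm φ
  | mp _ _ ih₁ ih₂ => exact ih₁ m le_rfl ih₂
  | an h => exact forces_of_isAxiom hV h le_rfl

end Kripke

abbrev CanonicalWorld : Type := {S : Set Fm // IsPrimeTheory S}

def canonicalVal (w : CanonicalWorld) (n : ℕ) : Prop := Fm.var n ∈ w.1

theorem canonicalVal_mono (n : ℕ) : Monotone (canonicalVal · n) :=
  fun _ _ hw h => hw h

theorem CanonicalWorld.exists_isMax_ge (w : CanonicalWorld) :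
    ∃ m : CanonicalWorld, w ≤ m ∧ IsMax m := by
  obtain ⟨M, hwM, hM⟩ := exists_maximal_not_ipc w.2.not_ipc_bot
  exact ⟨⟨M, .of_maximal hM⟩, hwM, fun w' hw' => hM.2 w'.2.not_ipc_bot hw'⟩

theorem forces_canonical_iff {r w : CanonicalWorld} {φ : Fm} (hφ : φ.IsProp) :
    Forces canonicalVal r w φ ↔ φ ∈ w.1 := by
  induction φ generalizing w with
  | var n => rfl
  | bot => exact ⟨False.elim, fun h => w.2.bot_notMem h⟩
  | and φ ψ ihφ ihψ =>
    rw [Forces, ihφ hφ.1, ihψ hφ.2]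
    exact ⟨fun h => w.2.mem_of_ipc (.mp (.mp (.ax (.andIntro φ ψ)) (.hyp h.1)) (.hyp h.2)),
      fun h => ⟨w.2.mem_of_ipc (.mp (.ax (.andLeft φ ψ)) (.hyp h)),
        w.2.mem_of_ipc (.mp (.ax (.andRight φ ψ)) (.hyp h))⟩⟩
  | or φ ψ ihφ ihψ =>
    rw [Forces, ihφ hφ.1, ihψ hφ.2]
    refine ⟨fun h => ?_, w.2.mem_or_mem⟩
    rcases h with h | h
    · exact w.2.mem_of_ipc (.mp (.ax (.orInl φ ψ)) (.hyp h))
    · exact w.2.mem_of_ipc (.mp (.ax (.orInr φ ψ)) (.hyp h))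
  | imp φ ψ ihφ ihψ =>
    refine ⟨fun h => ?_, fun h w' hw' hφw' =>
      (ihψ hφ.2).2 (w'.2.mem_of_imp_mem (hw' h) ((ihφ hφ.1).1 hφw'))⟩
    by_contra hφψ
    have hnot : ¬ IPC (insert φ w.1) ψ := fun hd => hφψ (w.2.mem_of_ipc (IPC.imp_intro hd))
    obtain ⟨S, hS, hwS, hψS⟩ := exists_isPrimeTheory hnot
    have hw : w ≤ ⟨S, hS⟩ := (Set.subset_insert φ _).trans hwS
    exact hψS ((ihψ hφ.2).1 (h ⟨S, hS⟩ hw ((ihφ hφ.1).2 (hwS (Set.mem_insert φ _)))))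
  | box φ => exact hφ.elim
  | k φ => exact hφ.elim

namespace Deriv

variable {L : ModalLogic} {Φ : Set Fm}

theorem box_mp {φ ψ : Fm} (h : Deriv L Φ (φ.imp ψ).box) (hφ : Deriv L Φ φ.box) :
    Deriv L Φ ψ.box :=
  mp (mp (ax (.a2 L _)) (mp (ax (.a3 L φ ψ)) h)) hφ

theorem box_of_ipc {χ : Fm} (h : IPC Φ χ) : Deriv L (Fm.box '' Φ) χ.box := by
  induction h with
  | hyp h => exact hyp ⟨_, h, rfl⟩
  | ax h => exact an (.int (.ax h))
  | mp _ _ ih₁ ih₂ => exact box_mp ih₁ ih₂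

end Deriv

theorem stmt_17_general (L : ModalLogic)
    (Φ : Set Fm) (χ : Fm) (hΦ : ∀ ψ ∈ Φ, ψ.IsProp) (hχ : χ.IsProp) :
    Deriv L (Fm.box '' Φ) (χ.box) ↔ IPC Φ χ := by
  refine ⟨fun hD => ?_, Deriv.box_of_ipc⟩
  by_contra hnot
  obtain ⟨T, hT, hΦT, hχT⟩ := exists_isPrimeTheory hnot
  let r : CanonicalWorld := ⟨T, hT⟩
  obtain ⟨m, hrm, hm⟩ := r.exists_isMax_ge
  have hboxΦ : ∀ ψ ∈ Fm.box '' Φ, Forces canonicalVal r m ψ := by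
    rintro _ ⟨ψ, hψ, rfl⟩
    exact (forces_canonical_iff (hΦ ψ hψ)).2 (hΦT hψ)
  have hχr : Forces canonicalVal r r χ := forces_of_deriv canonicalVal_mono hrm hm hboxΦ hD
  exact hχT ((forces_canonical_iff hχ).1 hχr)

/-- for propositional Φ ∪ {χ} ⊆ Fm₀ and
𝓛 ∈ {EL3⁻, EL3, EL4, EL5}: □Φ ⊢_𝓛 □χ iff Φ ⊢_{IPC} χ. -/
theorem stmt_17 (L : ModalLogic)
    (hL : L = ModalLogic.EL3m ∨ L = ModalLogic.EL3 ∨ L = ModalLogic.EL4 ∨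
      L = ModalLogic.EL5)
    (Φ : Set Fm) (χ : Fm) (hΦ : ∀ ψ ∈ Φ, ψ.IsProp) (hχ : χ.IsProp) :
    Deriv L (Fm.box '' Φ) (χ.box) ↔ IPC Φ χ :=
  stmt_17_general L Φ χ hΦ hχ
end

section
/- Restricted disjunction property: for 𝓛 ∈ {L3, EL3⁻, EL3, EL4, EL5} and propositional formulas φ, ψ ∈ Fm₀ (containing neither □ nor K), if ⊢_𝓛 □φ ∨ □ψ then ⊢_𝓛 □φ or ⊢_𝓛 □ψ. -/
/-!
Translate into IPC by erasing `K` and replacing each `□χ` by `⊤` or `⊥` according to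
whether the translation of `χ` is an IPC theorem. Every axiom translates to an IPC
theorem; for (A1) this is the disjunction property of IPC, proved with the Kleene slash.
Hence every theorem of each logic is classically true when `□χ` is read as IPC-provability
of the translation of `χ` (classically, because of (T)). Truth of `□φ ∨ □ψ` then says
that `φ` or `ψ` is an IPC theorem, so (INT) and Axiom Necessitation give `□φ` or `□ψ`.
-/

open Fm

namespace IPC

variable {Φ : Set Fm}

theorem imp_self_s18 (a : Fm) : IPC Φ (a.imp a) :=
  .mp (.mp (.ax (.s a (a.imp a) a)) (.ax (.k a (a.imp a)))) (.ax (.k a a))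

theorem top : IPC Φ Fm.top := imp_self_s18 .bot

theorem imp_of {b : Fm} (a : Fm) (h : IPC Φ b) : IPC Φ (a.imp b) :=
  .mp (.ax (.k b a)) h

theorem deduction {a b : Fm} (h : IPC (insert a Φ) b) : IPC Φ (a.imp b) := by
  induction h with
  | hyp h =>
    rcases Set.mem_insert_iff.mp h with rfl | h
    · exact imp_self_s18 _
    · exact imp_of a (.hyp h)
  | ax h => exact imp_of a (.ax h)
  | mp _ _ ih₁ ih₂ => exact .mp (.mp (.ax (.s a _ _)) ih₁) ih₂

theorem imp_apply (a b : Fm) : IPC Φ (a.imp ((a.imp b).imp b)) :=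
  deduction <| deduction <| .mp (φ := a) (.hyp (by simp)) (.hyp (by simp))

theorem neg_top_imp (χ : Fm) : IPC Φ (Fm.top.neg.imp χ) :=
  deduction <| .mp (.ax (.exfalso χ)) <| .mp (φ := Fm.top) (.hyp (Set.mem_insert _ _)) top

end IPC

def Slash : Fm → Prop
  | .var n => IPC ∅ (.var n)
  | .bot => False
  | .and a b => Slash a ∧ Slash b
  | .or a b => Slash a ∨ Slash b
  | .imp a b => IPC ∅ (a.imp b) ∧ (Slash a → Slash b)
  | .box a => IPC ∅ a.box
  | .k a => IPC ∅ a.k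

theorem IPC.of_slash {χ : Fm} (h : Slash χ) : IPC ∅ χ := by
  induction χ with
  | var | box | k => exact h
  | bot => exact h.elim
  | and a b iha ihb => exact .mp (.mp (.ax (.andIntro a b)) (iha h.1)) (ihb h.2)
  | or a b iha ihb =>
    exact h.elim (fun ha => .mp (.ax (.orInl a b)) (iha ha))
      (fun hb => .mp (.ax (.orInr a b)) (ihb hb))
  | imp => exact h.1

theorem IntAx.slash {χ : Fm} (h : IntAx χ) : Slash χ := by
  cases h with
  | k φ ψ => exact ⟨.ax (.k φ ψ), fun hφ => ⟨IPC.imp_of ψ (.of_slash hφ), fun _ => hφ⟩⟩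
  | s φ ψ χ =>
    exact ⟨.ax (.s φ ψ χ), fun h₁ => ⟨.mp (.ax (.s φ ψ χ)) h₁.1, fun h₂ =>
      ⟨.mp (.mp (.ax (.s φ ψ χ)) h₁.1) h₂.1, fun hφ => (h₁.2 hφ).2 (h₂.2 hφ)⟩⟩⟩
  | andIntro φ ψ =>
    exact ⟨.ax (.andIntro φ ψ), fun hφ =>
      ⟨.mp (.ax (.andIntro φ ψ)) (.of_slash hφ), fun hψ => ⟨hφ, hψ⟩⟩⟩
  | andLeft φ ψ => exact ⟨.ax (.andLeft φ ψ), And.left⟩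
  | andRight φ ψ => exact ⟨.ax (.andRight φ ψ), And.right⟩
  | orInl φ ψ => exact ⟨.ax (.orInl φ ψ), Or.inl⟩
  | orInr φ ψ => exact ⟨.ax (.orInr φ ψ), Or.inr⟩
  | orElim φ ψ χ =>
    exact ⟨.ax (.orElim φ ψ χ), fun h₁ => ⟨.mp (.ax (.orElim φ ψ χ)) h₁.1, fun h₂ =>
      ⟨.mp (.mp (.ax (.orElim φ ψ χ)) h₁.1) h₂.1, fun h => h.elim h₁.2 h₂.2⟩⟩⟩
  | exfalso φ => exact ⟨.ax (.exfalso φ), False.elim⟩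

theorem IPC.slash {χ : Fm} (h : IPC ∅ χ) : Slash χ := by
  induction h with
  | hyp h => exact absurd h (Set.notMem_empty _)
  | ax h => exact h.slash
  | mp _ _ ih₁ ih₂ => exact ih₁.2 ih₂

theorem IPC.disjunction_property {a b : Fm} (h : IPC ∅ (a.or b)) : IPC ∅ a ∨ IPC ∅ b :=
  h.slash.imp IPC.of_slash IPC.of_slash

open Classical in
noncomputable def Fm.truthConst (P : Prop) : Fm := if P then Fm.top else Fm.bot

namespace IPC

variable {Φ : Set Fm} {P Q : Prop}

theorem truthConst_of (h : P) : IPC Φ (truthConst P) := by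
  simpa only [truthConst, if_pos h] using top

theorem truthConst_imp_of {χ : Fm} (h : P → IPC Φ χ) : IPC Φ ((truthConst P).imp χ) := by
  by_cases hP : P
  · simpa only [truthConst, if_pos hP] using imp_of _ (h hP)
  · simpa only [truthConst, if_neg hP] using IPC.ax (.exfalso χ)

theorem truthConst_imp_truthConst (h : P → Q) :
    IPC Φ ((truthConst P).imp (truthConst Q)) :=
  truthConst_imp_of fun hP => truthConst_of (h hP)

end IPC

noncomputable def Fm.tr : Fm → Fm
  | .var n => .var n
  | .bot => .bot
  | .and a b => .and a.tr b.tr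
  | .or a b => .or a.tr b.tr
  | .imp a b => .imp a.tr b.tr
  | .box a => truthConst (IPC ∅ a.tr)
  | .k a => a.tr

theorem Fm.IsProp.tr_eq {φ : Fm} (h : φ.IsProp) : φ.tr = φ := by
  induction φ with
  | var | bot => rfl
  | and a b iha ihb | or a b iha ihb | imp a b iha ihb =>
    simp only [tr, iha h.1, ihb h.2]
  | box | k => exact h.elim

theorem IntAx.tr {χ : Fm} (h : IntAx χ) : IntAx χ.tr := by
  cases h <;> constructor

theorem IPC.tr {χ : Fm} (h : IPC ∅ χ) : IPC ∅ χ.tr := by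
  induction h with
  | hyp h => exact absurd h (Set.notMem_empty _)
  | ax h => exact .ax h.tr
  | mp _ _ ih₁ ih₂ => exact .mp ih₁ ih₂

theorem IsAxiom.ipc_tr {L : ModalLogic} {χ : Fm} (h : IsAxiom L χ) : IPC ∅ χ.tr := by
  cases h with
  | int h => exact h.tr
  | a1 φ ψ =>
    refine IPC.truthConst_imp_of fun hor => ?_
    rcases IPC.disjunction_property hor with hφ | hψ
    · exact .mp (.ax (.orInl _ _)) (IPC.truthConst_of hφ)
    · exact .mp (.ax (.orInr _ _)) (IPC.truthConst_of hψ)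
  | a2 φ => exact IPC.truthConst_imp_of id
  | a3 φ ψ =>
    exact IPC.truthConst_imp_of fun himp =>
      IPC.truthConst_of (IPC.truthConst_imp_truthConst fun hφ => .mp himp hφ)
  | a7 φ _ => exact IPC.imp_self_s18 _
  | a8 φ _ => exact IPC.imp_apply _ _
  | a4 φ _ => exact IPC.truthConst_imp_truthConst IPC.truthConst_of
  | a5 φ _ =>
    by_cases hφ : IPC ∅ φ.tr
    · simpa only [neg, tr, truthConst, if_pos hφ] using IPC.neg_top_imp _
    · refine IPC.imp_of _ (IPC.truthConst_of ?_)
      simpa only [neg, tr, truthConst, if_neg hφ] using IPC.imp_self_s18 Fm.bot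

def Fm.Holds (v : ℕ → Prop) : Fm → Prop
  | .var n => v n
  | .bot => False
  | .and a b => a.Holds v ∧ b.Holds v
  | .or a b => a.Holds v ∨ b.Holds v
  | .imp a b => a.Holds v → b.Holds v
  | .box a => IPC ∅ a.tr
  | .k a => a.Holds v

section Soundness

variable (v : ℕ → Prop)

theorem Fm.holds_truthConst (P : Prop) : (truthConst P).Holds v ↔ P := by
  by_cases hP : P <;> simp [truthConst, hP, Fm.top, neg, Holds]

theorem Fm.holds_tr (χ : Fm) : χ.tr.Holds v ↔ χ.Holds v := by
  induction χ with
  | var | bot => rfl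
  | and a b iha ihb | or a b iha ihb | imp a b iha ihb =>
    simp only [tr, Holds, iha, ihb]
  | box a => exact holds_truthConst v _
  | k a ih => exact ih

theorem IPC.holds {χ : Fm} (h : IPC ∅ χ) : χ.Holds v := by
  induction h with
  | hyp h => exact absurd h (Set.notMem_empty _)
  | ax h => cases h <;> simp only [Holds] <;> tauto
  | mp _ _ ih₁ ih₂ => exact ih₁ ih₂

theorem Thm.holds {L : ModalLogic} {χ : Fm} (h : Thm L χ) : χ.Holds v := by
  induction h with
  | hyp h => exact absurd h (Set.notMem_empty _)
  | ax h => exact (holds_tr v _).mp (h.ipc_tr.holds v)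
  | tnd φ => exact Classical.em _
  | mp _ _ ih₁ ih₂ => exact ih₁ ih₂
  | an h => exact h.ipc_tr

end Soundness

theorem stmt_18_general (L : ModalLogic)
    (φ ψ : Fm) (hφ : φ.IsProp) (hψ : ψ.IsProp)
    (h : Thm L ((φ.box).or (ψ.box))) :
    Thm L (φ.box) ∨ Thm L (ψ.box) := by
  have hprov : IPC ∅ φ.tr ∨ IPC ∅ ψ.tr := h.holds fun _ => False
  rw [hφ.tr_eq, hψ.tr_eq] at hprov
  exact hprov.imp (fun hφ => .an (.int hφ)) (fun hψ => .an (.int hψ))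

/-- restricted disjunction property for
𝓛 ∈ {L3, EL3⁻, EL3, EL4, EL5} and propositional φ, ψ ∈ Fm₀. -/
theorem stmt_18 (L : ModalLogic)
    (hL : L = ModalLogic.L3 ∨ L = ModalLogic.EL3m ∨ L = ModalLogic.EL3 ∨
      L = ModalLogic.EL4 ∨ L = ModalLogic.EL5)
    (φ ψ : Fm) (hφ : φ.IsProp) (hψ : ψ.IsProp)
    (h : Thm L ((φ.box).or (ψ.box))) :
    Thm L (φ.box) ∨ Thm L (ψ.box) :=
  stmt_18_general L φ ψ hφ hψ h
end
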